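/- For every real s > 0, g(s) ≤ (1/4)·(e^{4s} − 8·e^{3s/2} − 24·e^{−s/2} + 31). -/

import Mathlib

open MeasureTheory ProbabilityTheory

open scoped NNReal ENNReal

/-- `g s = ∫ tanh(s + √s · z) dγ(z)` where `γ` is the standard Gaussian measure. -/
noncomputable def gaussTanh (s : ℝ) : ℝ :=
  ∫ z, Real.tanh (s + Real.sqrt s * z) ∂(gaussianReal 0 1)

section aux
open Real

lemma tanh_le_bound (x : ℝ) :
    Real.tanh x ≤ (1/8) * Real.exp (2*x) + (1/8) * Real.exp ((-4)*x) - Real.exp (1*x)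
      - Real.exp ((-3)*x) + (27/8) * Real.exp ((-2)*x) - 6 * Real.exp ((-1)*x) + 35/8 := by
  have he : 0 < Real.exp x := Real.exp_pos x
  set e := Real.exp x with hedef
  have h2 : Real.exp (2*x) = e*e := by rw [hedef, ← Real.exp_add]; ring_nf
  have h4 : Real.exp ((-4)*x) = (e*e*e*e)⁻¹ := by
    rw [hedef, ← Real.exp_add, ← Real.exp_add, ← Real.exp_add, ← Real.exp_neg]; ring_nf
  have h1 : Real.exp (1*x) = e := by rw [hedef]; ring_nf
  have h3 : Real.exp ((-3)*x) = (e*e*e)⁻¹ := by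
    rw [hedef, ← Real.exp_add, ← Real.exp_add, ← Real.exp_neg]; ring_nf
  have h2' : Real.exp ((-2)*x) = (e*e)⁻¹ := by
    rw [hedef, ← Real.exp_add, ← Real.exp_neg]; ring_nf
  have h1' : Real.exp ((-1)*x) = e⁻¹ := by rw [hedef, ← Real.exp_neg]; ring_nf
  rw [Real.tanh_eq_sinh_div_cosh, Real.sinh_eq, Real.cosh_eq, Real.exp_neg, h2, h4, h1, h3, h2', h1', ← hedef]
  have hne : e ≠ 0 := he.ne'
  have key : (1/8) * (e*e) + (1/8) * (e*e*e*e)⁻¹ - e - (e*e*e)⁻¹ + (27/8) * (e*e)⁻¹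
      - 6 * e⁻¹ + 35/8 - (e - e⁻¹)/2 / ((e + e⁻¹)/2)
      = (e-1)^8 / (8 * e^4 * (e^2+1)) := by
    field_simp
    ring
  have hnn : 0 ≤ (e-1)^8 / (8 * e^4 * (e^2+1)) := by positivity
  linarith [key ▸ hnn]


lemma gaussianPDFReal_mul_exp (t x : ℝ) :
    gaussianPDFReal 0 1 x * Real.exp (t*x) = Real.exp (t^2/2) * gaussianPDFReal t 1 x := by
  simp only [gaussianPDFReal, NNReal.coe_one, mul_one]
  rw [mul_assoc, ← Real.exp_add, mul_comm (Real.exp (t^2/2)) _, mul_assoc, ← Real.exp_add]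
  congr 2
  ring

lemma integrable_gauss_exp (t : ℝ) :
    Integrable (fun z => Real.exp (t*z)) (gaussianReal 0 1) := by
  rw [gaussianReal_of_var_ne_zero 0 one_ne_zero,
    show gaussianPDF 0 1 = fun x => ((Real.toNNReal (gaussianPDFReal 0 1 x) : ℝ≥0) : ℝ≥0∞) from rfl,
    integrable_withDensity_iff_integrable_smul (measurable_gaussianPDFReal 0 1).real_toNNReal]
  refine ((integrable_gaussianPDFReal t 1).const_mul (Real.exp (t^2/2))).congr
    (Filter.Eventually.of_forall fun x => ?_)
  simp only [NNReal.smul_def, smul_eq_mul, Real.coe_toNNReal _ (gaussianPDFReal_nonneg 0 1 x),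
    gaussianPDFReal_mul_exp]

lemma integral_gauss_exp (t : ℝ) :
    ∫ z, Real.exp (t*z) ∂(gaussianReal 0 1) = Real.exp (t^2/2) := by
  rw [gaussianReal_of_var_ne_zero 0 one_ne_zero,
    show gaussianPDF 0 1 = fun x => ((Real.toNNReal (gaussianPDFReal 0 1 x) : ℝ≥0) : ℝ≥0∞) from rfl,
    integral_withDensity_eq_integral_smul (measurable_gaussianPDFReal 0 1).real_toNNReal]
  have h : ∀ x, ((gaussianPDFReal 0 1 x).toNNReal : ℝ≥0) • Real.exp (t*x)
      = Real.exp (t^2/2) * gaussianPDFReal t 1 x := fun x => by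
    simp only [NNReal.smul_def, smul_eq_mul, Real.coe_toNNReal _ (gaussianPDFReal_nonneg 0 1 x),
      gaussianPDFReal_mul_exp]
  rw [show (fun x => ((gaussianPDFReal 0 1 x).toNNReal : ℝ≥0) • Real.exp (t*x))
      = fun x => Real.exp (t^2/2) * gaussianPDFReal t 1 x from funext h,
    integral_const_mul, integral_gaussianPDFReal_eq_one t one_ne_zero, mul_one]

lemma ible (s a : ℝ) :
    Integrable (fun z => Real.exp (a*(s + Real.sqrt s * z))) (gaussianReal 0 1) := by
  refine ((integrable_gauss_exp (a * Real.sqrt s)).const_mul (Real.exp (a*s))).congr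
    (Filter.Eventually.of_forall fun z => ?_)
  simp only [← Real.exp_add]
  congr 1
  ring

lemma intval (s a : ℝ) (hs : 0 ≤ s) :
    ∫ z, Real.exp (a*(s + Real.sqrt s * z)) ∂(gaussianReal 0 1)
      = Real.exp (a*s + a^2*s/2) := by
  have h : (fun z => Real.exp (a*(s + Real.sqrt s * z)))
      = fun z => Real.exp (a*s) * Real.exp ((a * Real.sqrt s) * z) := by
    funext z; rw [← Real.exp_add]; congr 1; ring
  rw [h, integral_const_mul, integral_gauss_exp, ← Real.exp_add, mul_pow, Real.sq_sqrt hs]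

lemma continuous_tanh' : Continuous Real.tanh := by
  rw [show Real.tanh = fun x => Real.sinh x / Real.cosh x from
    funext fun x => Real.tanh_eq_sinh_div_cosh x]
  exact Real.continuous_sinh.div Real.continuous_cosh fun x => (Real.cosh_pos x).ne'

lemma abs_tanh_le_one (x : ℝ) : |Real.tanh x| ≤ 1 := by
  rw [Real.tanh_eq_sinh_div_cosh, abs_div, abs_of_pos (Real.cosh_pos x),
    div_le_one (Real.cosh_pos x), abs_le, Real.sinh_eq, Real.cosh_eq]
  constructor <;> nlinarith [Real.exp_pos x, Real.exp_pos (-x)]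

end aux

section aux2
open Real

theorem gaussTanh_le_exp_bound (s : ℝ) (hs : 0 < s) :
    gaussTanh s ≤ (1 / 4) *
      (Real.exp (4 * s) - 8 * Real.exp (3 * s / 2) - 24 * Real.exp (-s / 2) + 31) := by
  have hs0 : (0:ℝ) ≤ s := hs.le
  set γ := gaussianReal 0 1 with hγ
  have A2 : Integrable (fun z => (1/8) * Real.exp (2*(s + Real.sqrt s * z))) γ :=
    (ible s 2).const_mul _
  have A4 : Integrable (fun z => (1/8) * Real.exp ((-4)*(s + Real.sqrt s * z))) γ :=
    (ible s (-4)).const_mul _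
  have A2' : Integrable (fun z => (27/8) * Real.exp ((-2)*(s + Real.sqrt s * z))) γ :=
    (ible s (-2)).const_mul _
  have A1' : Integrable (fun z => 6 * Real.exp ((-1)*(s + Real.sqrt s * z))) γ :=
    (ible s (-1)).const_mul _
  have B1 : Integrable (fun z => (1/8) * Real.exp (2*(s + Real.sqrt s * z))
      + (1/8) * Real.exp ((-4)*(s + Real.sqrt s * z))) γ := A2.add A4
  have B2 : Integrable (fun z => (1/8) * Real.exp (2*(s + Real.sqrt s * z))
      + (1/8) * Real.exp ((-4)*(s + Real.sqrt s * z))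
      - Real.exp (1*(s + Real.sqrt s * z))) γ := B1.sub (ible s 1)
  have B3 : Integrable (fun z => (1/8) * Real.exp (2*(s + Real.sqrt s * z))
      + (1/8) * Real.exp ((-4)*(s + Real.sqrt s * z))
      - Real.exp (1*(s + Real.sqrt s * z)) - Real.exp ((-3)*(s + Real.sqrt s * z))) γ :=
    B2.sub (ible s (-3))
  have B4 : Integrable (fun z => (1/8) * Real.exp (2*(s + Real.sqrt s * z))
      + (1/8) * Real.exp ((-4)*(s + Real.sqrt s * z))
      - Real.exp (1*(s + Real.sqrt s * z)) - Real.exp ((-3)*(s + Real.sqrt s * z))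
      + (27/8) * Real.exp ((-2)*(s + Real.sqrt s * z))) γ := B3.add A2'
  have B5 : Integrable (fun z => (1/8) * Real.exp (2*(s + Real.sqrt s * z))
      + (1/8) * Real.exp ((-4)*(s + Real.sqrt s * z))
      - Real.exp (1*(s + Real.sqrt s * z)) - Real.exp ((-3)*(s + Real.sqrt s * z))
      + (27/8) * Real.exp ((-2)*(s + Real.sqrt s * z))
      - 6 * Real.exp ((-1)*(s + Real.sqrt s * z))) γ := B4.sub A1'
  have hB : Integrable (fun z => (1/8) * Real.exp (2*(s + Real.sqrt s * z))
      + (1/8) * Real.exp ((-4)*(s + Real.sqrt s * z))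
      - Real.exp (1*(s + Real.sqrt s * z)) - Real.exp ((-3)*(s + Real.sqrt s * z))
      + (27/8) * Real.exp ((-2)*(s + Real.sqrt s * z))
      - 6 * Real.exp ((-1)*(s + Real.sqrt s * z)) + 35/8) γ := B5.add (integrable_const _)
  have htanh : Integrable (fun z => Real.tanh (s + Real.sqrt s * z)) γ := by
    refine Integrable.mono' (integrable_const 1) ?_ ?_
    · exact (continuous_tanh'.comp
        (continuous_const.add (continuous_const.mul continuous_id))).aestronglyMeasurable
    · exact Filter.Eventually.of_forall fun z => by
        rw [Real.norm_eq_abs]; exact abs_tanh_le_one _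
  have hmono : gaussTanh s ≤ ∫ z, ((1/8) * Real.exp (2*(s + Real.sqrt s * z))
      + (1/8) * Real.exp ((-4)*(s + Real.sqrt s * z))
      - Real.exp (1*(s + Real.sqrt s * z)) - Real.exp ((-3)*(s + Real.sqrt s * z))
      + (27/8) * Real.exp ((-2)*(s + Real.sqrt s * z))
      - 6 * Real.exp ((-1)*(s + Real.sqrt s * z)) + 35/8) ∂γ :=
    integral_mono htanh hB fun z => tanh_le_bound (s + Real.sqrt s * z)
  refine hmono.trans_eq ?_
  rw [integral_add B5 (integrable_const _), integral_sub B4 A1', integral_add B3 A2',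
    integral_sub B2 (ible s (-3)), integral_sub B1 (ible s 1), integral_add A2 A4,
    integral_const_mul, integral_const_mul, integral_const_mul, integral_const_mul,
    integral_const, intval s 2 hs0, intval s (-4) hs0, intval s 1 hs0, intval s (-3) hs0,
    intval s (-2) hs0, intval s (-1) hs0]
  simp only [measure_univ, probReal_univ, ENNReal.toReal_one, smul_eq_mul, one_mul]
  rw [show (2:ℝ)*s + 2^2*s/2 = 4*s by ring, show (-4:ℝ)*s + (-4)^2*s/2 = 4*s by ring,
    show s + (1:ℝ)^2*s/2 = 3*s/2 by ring, show (-3:ℝ)*s + (-3)^2*s/2 = 3*s/2 by ring,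
    show (-2:ℝ)*s + (-2)^2*s/2 = 0 by ring, show (-1:ℝ)*s + (-1)^2*s/2 = -s/2 by ring,
    Real.exp_zero]
  ring


end aux2
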